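/- Fix c ∈ [−1,1] and ω ∈ ℝ. Then, as h → 0⁺, h² · Q̂₂(hω; h) converges to −32(2 − c)/3; i.e. the spurious symbol satisfies Q̂₂(hω; h) = −32(2−c)/(3h²) + O(1). -/

import Mathlib

open Filter Topology

/-- `Ω(θ) = −cos(θ/2)(16 − (7 + cos θ)c)`. -/
noncomputable def Om (c θ : ℝ) : ℝ :=
  -Real.cos (θ/2) * (16 - (7 + Real.cos θ)*c)

/-- `Δ(θ) = √(Ω(θ)² + 4c² sin⁶(θ/2))`. -/
noncomputable def Del (c θ : ℝ) : ℝ :=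
  Real.sqrt ((Om c θ)^2 + 4*c^2*(Real.sin (θ/2))^6)

/-- The principal symbol `Q̂₁(θ; h)`. -/
noncomputable def Qhat1 (c h θ : ℝ) : ℝ :=
  (2/(3*h^2)) * (-(15 + Real.cos θ) + (5 + 3*Real.cos θ)*c + Del c θ)

/-- The spurious symbol `Q̂₂(θ; h)`. -/
noncomputable def Qhat2 (c h θ : ℝ) : ℝ :=
  (2/(3*h^2)) * (-(15 + Real.cos θ) + (5 + 3*Real.cos θ)*c - Del c θ)

/-!
`h² Q̂₂(θ; h)` does not depend on `h`: it is a continuous function of `θ` alone. Since `hω → 0`,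
the limit is its value at `θ = 0`, namely `(2/3)(−16 + 8c − |16 − 8c|)`, which is
`−32(2 − c)/3` as soon as `c ≤ 2`.
-/

@[fun_prop]
theorem continuous_Del (c : ℝ) : Continuous (Del c) := by
  unfold Del Om
  fun_prop

theorem Del_zero (c : ℝ) : Del c 0 = |16 - 8*c| := by
  rw [Del, Om, ← Real.sqrt_sq_eq_abs]
  norm_num
  ring_nf

theorem sq_mul_Qhat2 (c θ : ℝ) {h : ℝ} (hh : h ≠ 0) :
    h^2 * Qhat2 c h θ =
      2/3 * (-(15 + Real.cos θ) + (5 + 3*Real.cos θ)*c - Del c θ) := by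
  rw [Qhat2]
  field_simp

/-- The spurious symbol satisfies `h² Q̂₂(hω; h) → −32(2 − c)/3` as `h → 0⁺`. -/
theorem Qhat2_leading_order (c : ℝ) (hc : c ∈ Set.Icc (-1 : ℝ) 1) (ω : ℝ) :
    Tendsto (fun h : ℝ => h^2 * Qhat2 c h (h*ω)) (𝓝[>] 0)
      (𝓝 (-32*(2 - c)/3)) := by
  have hθ : Tendsto (fun h : ℝ => h*ω) (𝓝[>] 0) (𝓝 0) :=
    ((continuous_mul_const ω).tendsto' 0 0 (zero_mul ω)).mono_left nhdsWithin_le_nhds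
  have hsymbol : Tendsto
      (fun θ : ℝ => 2/3 * (-(15 + Real.cos θ) + (5 + 3*Real.cos θ)*c - Del c θ))
      (𝓝 0) (𝓝 (-32*(2 - c)/3)) := by
    have hlim := (by fun_prop : Continuous
      fun θ : ℝ => 2/3 * (-(15 + Real.cos θ) + (5 + 3*Real.cos θ)*c - Del c θ)).tendsto 0
    rwa [Del_zero, abs_of_nonneg (by linarith [hc.2]), Real.cos_zero,
      show (2/3 : ℝ) * (-(15 + 1) + (5 + 3*1)*c - (16 - 8*c)) = -32*(2 - c)/3 by ring] at hlim
  refine (hsymbol.comp hθ).congr' ?_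
  filter_upwards [self_mem_nhdsWithin] with h hh
  exact (sq_mul_Qhat2 c (h*ω) (ne_of_gt hh)).symm
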